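/- arXiv:1703.03916 — 5 statements merged into one kernel-verified Lean document; each statement's English description precedes it below -/
import Mathlib

section
/- Answer sets are incomparable: if M1 and M2 are both answer sets of a normal logic program P and M1 ⊆ M2, then M1 = M2. -/
structure NRule (α : Type) where
  head : α
  pos : Finset α
  neg : Finset α

def satRule {α : Type} (M : Set α) (r : NRule α) : Prop :=
  ↑r.pos ⊆ M → (↑r.neg ∩ M : Set α) = ∅ → r.head ∈ M

def isModel {α : Type} (M : Set α) (P : Set (NRule α)) : Prop :=
  ∀ r ∈ P, satRule M r

def reduct {α : Type} (P : Set (NRule α)) (M : Set α) : Set (NRule α) :=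
  (fun r => ⟨r.head, r.pos, ∅⟩) '' {r ∈ P | (↑r.neg ∩ M : Set α) = ∅}

def isMinModel {α : Type} (M : Set α) (P : Set (NRule α)) : Prop :=
  isModel M P ∧ ∀ M' ⊆ M, isModel M' P → M' = M

def isAnswerSet {α : Type} (M : Set α) (P : Set (NRule α)) : Prop :=
  isMinModel M (reduct P M)

def isSupported {α : Type} (M : Set α) (P : Set (NRule α)) : Prop :=
  isModel M P ∧ ∀ a ∈ M, ∃ r ∈ P, r.head = a ∧ ↑r.pos ⊆ M ∧ (↑r.neg ∩ M : Set α) = ∅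

def isDefinite {α : Type} (P : Set (NRule α)) : Prop :=
  ∀ r ∈ P, r.neg = ∅

def isLocallyStratified {α : Type} (P : Set (NRule α)) : Prop :=
  ∃ l : α → ℕ, ∀ r ∈ P, (∀ b ∈ r.pos, l b ≤ l r.head) ∧ (∀ c ∈ r.neg, l c < l r.head)

def hasLevelRanking {α : Type} (M : Set α) (P : Set (NRule α)) : Prop :=
  ∃ lr : α → ℕ, ∀ a ∈ M, ∃ r ∈ P, r.head = a ∧ ↑r.pos ⊆ M ∧ (↑r.neg ∩ M : Set α) = ∅ ∧
    ∀ b ∈ r.pos, lr b + 1 ≤ lr a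

theorem reduct_antitone {α : Type} (P : Set (NRule α)) : Antitone (reduct P) := by
  rintro M1 M2 hsub _ ⟨r, ⟨hrP, hr2⟩, rfl⟩
  refine ⟨r, ⟨hrP, Set.subset_empty_iff.mp ?_⟩, rfl⟩
  exact hr2 ▸ Set.inter_subset_inter_right _ hsub

theorem isModel.mono {α : Type} {M : Set α} {P Q : Set (NRule α)}
    (hP : isModel M P) (hQP : Q ⊆ P) : isModel M Q :=
  fun r hr => hP r (hQP hr)

theorem stmt_4 {α : Type} (P : Set (NRule α)) (M1 M2 : Set α)
    (h1 : isAnswerSet M1 P) (h2 : isAnswerSet M2 P) (hsub : M1 ⊆ M2) :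
    M1 = M2 :=
  h2.2 M1 hsub (h1.1.mono (reduct_antitone P hsub))
end

section
/- Let M be a supported model of a normal logic program P. Then M is an answer set of P if and only if there exists a level ranking of M for P, i.e., a function lr : M → ℕ such that for each a ∈ M there is a rule r ∈ P_M with H(r) = a and lr(b) ≤ lr(a) − 1 for every b ∈ B+(r). -/
/-!
An answer set is the least model of the reduct `P^M`, and that least model is the union of the
stages `T^k(∅)` of the immediate-consequence operator of `P^M`. So `M` is an answer set iff every
atom of `M` is derived at some finite stage. The first stage containing `a` is then a level
ranking; conversely, a level ranking derives each `a ∈ M` by stage `lr a + 1`.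
-/

section ConsequenceStages

variable {α : Type} (Q : Set (NRule α))

/-- The immediate-consequence operator `T_Q`; negative bodies are ignored, so it is meant for
definite programs. -/
def immConseq (S : Set α) : Set α :=
  {a | ∃ r ∈ Q, r.head = a ∧ ↑r.pos ⊆ S}

def conseqStage (k : ℕ) : Set α :=
  (immConseq Q)^[k] ∅

theorem immConseq_mono : Monotone (immConseq Q) :=
  fun _ _ hST _ ⟨r, hr, hhead, hpos⟩ => ⟨r, hr, hhead, hpos.trans hST⟩

@[simp]
theorem conseqStage_zero : conseqStage Q 0 = ∅ := rfl

theorem conseqStage_succ (k : ℕ) : conseqStage Q (k + 1) = immConseq Q (conseqStage Q k) :=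
  Function.iterate_succ_apply' _ _ _

theorem conseqStage_mono : Monotone (conseqStage Q) :=
  (immConseq_mono Q).monotone_iterate_of_le_map (Set.empty_subset _)

variable {Q}

theorem conseqStage_subset_of_isModel (hQ : isDefinite Q) {N : Set α} (hN : isModel N Q) (k : ℕ) :
    conseqStage Q k ⊆ N := by
  induction k with
  | zero => exact Set.empty_subset _
  | succ k ih =>
    rw [conseqStage_succ]
    rintro _ ⟨r, hr, rfl, hpos⟩
    exact hN r hr (hpos.trans ih) (by simp [hQ r hr])

variable (Q) in
theorem isModel_iUnion_conseqStage : isModel (⋃ k, conseqStage Q k) Q := by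
  intro r hr hpos _
  obtain ⟨k, hk⟩ := (conseqStage_mono Q).directed_le.exists_mem_subset_of_finset_subset_biUnion hpos
  exact Set.mem_iUnion.mpr ⟨k + 1, by rw [conseqStage_succ]; exact ⟨r, hr, rfl, hk⟩⟩

theorem isMinModel_iff_subset_iUnion_conseqStage (hQ : isDefinite Q) {M : Set α} :
    isMinModel M Q ↔ isModel M Q ∧ M ⊆ ⋃ k, conseqStage Q k := by
  have stages_subset {N : Set α} (hN : isModel N Q) : ⋃ k, conseqStage Q k ⊆ N :=
    Set.iUnion_subset (conseqStage_subset_of_isModel hQ hN)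
  constructor
  · rintro ⟨hM, hmin⟩
    exact ⟨hM, (hmin _ (stages_subset hM) (isModel_iUnion_conseqStage Q)).ge⟩
  · rintro ⟨hM, hstages⟩
    exact ⟨hM, fun N hNM hN => hNM.antisymm (hstages.trans (stages_subset hN))⟩

end ConsequenceStages

section Reduct

variable {α : Type} {P : Set (NRule α)} {M : Set α}

theorem isDefinite_reduct : isDefinite (reduct P M) := by
  rintro _ ⟨r, _, rfl⟩
  rfl

theorem isModel_reduct (hM : isModel M P) : isModel M (reduct P M) := by
  rintro _ ⟨r, ⟨hr, hneg⟩, rfl⟩ hpos _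
  exact hM r hr hpos hneg

theorem mem_conseqStage_reduct_succ {a : α} {k : ℕ} :
    a ∈ conseqStage (reduct P M) (k + 1) ↔
      ∃ r ∈ P, r.head = a ∧ ↑r.pos ⊆ conseqStage (reduct P M) k ∧ (↑r.neg ∩ M : Set α) = ∅ := by
  rw [conseqStage_succ]
  constructor
  · rintro ⟨_, ⟨r, ⟨hr, hneg⟩, rfl⟩, hhead, hpos⟩
    exact ⟨r, hr, hhead, hpos, hneg⟩
  · rintro ⟨r, hr, hhead, hpos, hneg⟩
    exact ⟨_, ⟨r, ⟨hr, hneg⟩, rfl⟩, hhead, hpos⟩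

theorem isAnswerSet_iff_subset_iUnion_conseqStage (hM : isModel M P) :
    isAnswerSet M P ↔ M ⊆ ⋃ k, conseqStage (reduct P M) k := by
  rw [isAnswerSet, isMinModel_iff_subset_iUnion_conseqStage isDefinite_reduct]
  exact and_iff_right (isModel_reduct hM)

theorem hasLevelRanking_of_subset_iUnion_conseqStage (hM : isModel M P)
    (hstages : M ⊆ ⋃ k, conseqStage (reduct P M) k) : hasLevelRanking M P := by
  let firstStage (a : α) : ℕ := sInf {k | a ∈ conseqStage (reduct P M) k}
  refine ⟨firstStage, fun a ha => ?_⟩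
  have ha_first : a ∈ conseqStage (reduct P M) (firstStage a) :=
    Nat.sInf_mem (Set.mem_iUnion.mp (hstages ha))
  obtain ⟨k, hk⟩ : ∃ k, firstStage a = k + 1 :=
    Nat.exists_eq_succ_of_ne_zero fun h0 => by simp [h0] at ha_first
  rw [hk, mem_conseqStage_reduct_succ] at ha_first
  obtain ⟨r, hr, hhead, hpos, hneg⟩ := ha_first
  refine ⟨r, hr, hhead, hpos.trans (conseqStage_subset_of_isModel isDefinite_reduct
    (isModel_reduct hM) k), hneg, fun b hb => ?_⟩
  rw [hk, Nat.add_le_add_iff_right]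
  exact Nat.sInf_le (hpos hb)

theorem subset_iUnion_conseqStage_of_hasLevelRanking (h : hasLevelRanking M P) :
    M ⊆ ⋃ k, conseqStage (reduct P M) k := by
  obtain ⟨lr, hlr⟩ := h
  have derived : ∀ n, ∀ a ∈ M, lr a < n → a ∈ conseqStage (reduct P M) n := by
    intro n
    induction n with
    | zero => intro a _ h; omega
    | succ n ih =>
      intro a ha hlt
      obtain ⟨r, hr, hhead, hpos, hneg, hrank⟩ := hlr a ha
      exact mem_conseqStage_reduct_succ.mpr
        ⟨r, hr, hhead, fun b hb => ih b (hpos hb) (by have := hrank b hb; omega), hneg⟩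
  exact fun a ha => Set.mem_iUnion.mpr ⟨_, derived (lr a + 1) a ha (Nat.lt_succ_self _)⟩

end Reduct

theorem stmt_6_general {α : Type} (P : Set (NRule α)) (M : Set α)
    (hs : isSupported M P) :
    isAnswerSet M P ↔ hasLevelRanking M P := by
  rw [isAnswerSet_iff_subset_iUnion_conseqStage hs.1]
  exact ⟨hasLevelRanking_of_subset_iUnion_conseqStage hs.1,
    subset_iUnion_conseqStage_of_hasLevelRanking⟩

theorem stmt_6 {α : Type} (P : Set (NRule α)) (hP : P.Finite) (M : Set α)
    (hs : isSupported M P) :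
    isAnswerSet M P ↔ hasLevelRanking M P :=
  stmt_6_general P M hs
end

section
/- If a normal logic program P is locally stratified, then P has at most one answer set. (In fact exactly one, but uniqueness alone: any two answer sets of a locally stratified program are equal.) -/
lemma key_level {α : Type} (P : Set (NRule α)) (l : α → ℕ)
    (hl : ∀ r ∈ P, (∀ b ∈ r.pos, l b ≤ l r.head) ∧ (∀ c ∈ r.neg, l c < l r.head))
    (M1 M2 : Set α) (h1 : isAnswerSet M1 P) (h2 : isAnswerSet M2 P)
    (n : ℕ) (IH : ∀ a, l a < n → (a ∈ M1 ↔ a ∈ M2)) :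
    ∀ a ∈ M2, l a ≤ n → a ∈ M1 := by
  set N : Set α := {a ∈ M2 | l a ≤ n → a ∈ M1} with hN
  have hsub : N ⊆ M2 := fun a ha => ha.1
  have hmod : isModel N (reduct P M2) := by
    rintro r' ⟨r, ⟨hrP, hneg⟩, rfl⟩
    intro hpos _
    have hposM2 : (↑r.pos : Set α) ⊆ M2 := fun b hb => hsub (hpos hb)
    have hhead2 : r.head ∈ M2 := by
      have hr' : (⟨r.head, r.pos, ∅⟩ : NRule α) ∈ reduct P M2 :=
        ⟨r, ⟨hrP, hneg⟩, rfl⟩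
      exact h2.1 ⟨r.head, r.pos, ∅⟩ hr' hposM2 (by simp)
    refine ⟨hhead2, fun hle => ?_⟩
    -- neg of r doesn't meet M1
    have hneg1 : (↑r.neg ∩ M1 : Set α) = ∅ := by
      ext c
      simp only [Set.mem_inter_iff, Set.mem_empty_iff_false, iff_false, not_and]
      intro hc hc1
      have hlt : l c < n := lt_of_lt_of_le ((hl r hrP).2 c hc) hle
      have hc2 : c ∈ M2 := (IH c hlt).mp hc1
      have : c ∈ (↑r.neg ∩ M2 : Set α) := ⟨hc, hc2⟩
      rw [hneg] at this
      exact this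
    have hposM1 : (↑r.pos : Set α) ⊆ M1 := by
      intro b hb
      have hbN : b ∈ N := hpos hb
      exact hbN.2 (le_trans ((hl r hrP).1 b hb) hle)
    have hr1 : (⟨r.head, r.pos, ∅⟩ : NRule α) ∈ reduct P M1 :=
      ⟨r, ⟨hrP, hneg1⟩, rfl⟩
    exact h1.1 _ hr1 hposM1 (by simp)
  have hNM2 : N = M2 := h2.2 N hsub hmod
  intro a ha hle
  have : a ∈ N := hNM2 ▸ ha
  exact this.2 hle

theorem stmt_7 {α : Type} (P : Set (NRule α)) (hP : P.Finite)
    (hstrat : isLocallyStratified P) (M1 M2 : Set α)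
    (h1 : isAnswerSet M1 P) (h2 : isAnswerSet M2 P) : M1 = M2 := by
  obtain ⟨l, hl⟩ := hstrat
  have Q : ∀ n a, l a ≤ n → (a ∈ M1 ↔ a ∈ M2) := by
    intro n
    induction n using Nat.strong_induction_on with
    | _ n IH =>
      intro a hle
      have IH' : ∀ b, l b < n → (b ∈ M1 ↔ b ∈ M2) :=
        fun b hb => IH (l b) hb b le_rfl
      constructor
      · intro ha; exact key_level P l hl M2 M1 h2 h1 n
          (fun b hb => (IH' b hb).symm) a ha hle
      · intro ha; exact key_level P l hl M1 M2 h1 h2 n IH' a ha hle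
  ext a
  exact Q (l a) a le_rfl
end

section
/- Every locally stratified finite normal logic program has an answer set. -/
/-!
Build the answer set level by level: the `(n+1)`-st stratum is the least set that contains the
`n`-th one and is closed under the rules with head at level `n` whose negative body avoids the
`n`-th stratum. Atoms of level `< n` never enter later strata, and negative body atoms have
strictly smaller level than the head, so the guess made at level `n` about the negative body
agrees with the final union `M`. Hence `M` is a model of the reduct `P^M`, and any model of
`P^M` inside `M` contains every stratum by induction, so equals `M`.
-/

section Stratification

variable {α : Type} {P : Set (NRule α)} {l : α → ℕ}

def IsStratification (P : Set (NRule α)) (l : α → ℕ) : Prop :=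
  ∀ r ∈ P, (∀ b ∈ r.pos, l b ≤ l r.head) ∧ (∀ c ∈ r.neg, l c < l r.head)

theorem isLocallyStratified_iff : isLocallyStratified P ↔ ∃ l, IsStratification P l :=
  Iff.rfl

def StratumClosed (P : Set (NRule α)) (l : α → ℕ) (n : ℕ) (lower S : Set α) : Prop :=
  lower ⊆ S ∧ ∀ r ∈ P, l r.head = n → (↑r.neg ∩ lower : Set α) = ∅ → ↑r.pos ⊆ S → r.head ∈ S

def stratum (P : Set (NRule α)) (l : α → ℕ) : ℕ → Set α
  | 0 => ∅
  | n + 1 => ⋂₀ {S | StratumClosed P l n (stratum P l n) S}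

theorem stratum_succ_subset_of_closed {n : ℕ} {S : Set α}
    (hS : StratumClosed P l n (stratum P l n) S) : stratum P l (n + 1) ⊆ S :=
  Set.sInter_subset_of_mem hS

theorem stratumClosed_stratum_succ (n : ℕ) :
    StratumClosed P l n (stratum P l n) (stratum P l (n + 1)) :=
  ⟨fun _ ha => Set.mem_sInter.2 fun _ hS => hS.1 ha, fun r hr hn hneg hpos =>
    Set.mem_sInter.2 fun _ hS => hS.2 r hr hn hneg (hpos.trans (Set.sInter_subset_of_mem hS))⟩

theorem monotone_stratum : Monotone (stratum P l) :=
  monotone_nat_of_le_succ fun n => (stratumClosed_stratum_succ n).1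

theorem stratum_succ_subset (n : ℕ) :
    stratum P l (n + 1) ⊆ stratum P l n ∪ {a | l a = n} :=
  stratum_succ_subset_of_closed
    ⟨Set.subset_union_left, fun _ _ hn _ _ => Or.inr hn⟩

theorem mem_stratum_of_level_lt {m n : ℕ} {a : α} (ha : a ∈ stratum P l m) (hlt : l a < n) :
    a ∈ stratum P l n := by
  induction m with
  | zero => exact ha.elim
  | succ m ih =>
    rcases stratum_succ_subset m ha with ha | rfl
    · exact ih ha
    · exact monotone_stratum (Nat.succ_le_of_lt hlt) ha

theorem mem_iUnion_stratum_iff {n : ℕ} {a : α} (hlt : l a < n) :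
    a ∈ ⋃ k, stratum P l k ↔ a ∈ stratum P l n :=
  ⟨fun ha => (Set.mem_iUnion.1 ha).elim fun _ hk => mem_stratum_of_level_lt hk hlt,
    fun ha => Set.mem_iUnion_of_mem n ha⟩

theorem isModel_reduct_iUnion_stratum (hl : IsStratification P l) :
    isModel (⋃ k, stratum P l k) (reduct P (⋃ k, stratum P l k)) := by
  rintro _ ⟨r, ⟨hr, hneg⟩, rfl⟩ hpos -
  refine Set.mem_iUnion_of_mem (l r.head + 1) ((stratumClosed_stratum_succ _).2 r hr rfl ?_ ?_)
  · exact Set.subset_eq_empty (Set.inter_subset_inter_right _ (Set.subset_iUnion _ _)) hneg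
  · exact fun b hb => (mem_iUnion_stratum_iff (Nat.lt_succ_of_le ((hl r hr).1 b hb))).1 (hpos hb)

theorem stratum_subset_of_isModel_reduct (hl : IsStratification P l) {M : Set α}
    (hM : isModel M (reduct P (⋃ k, stratum P l k))) (n : ℕ) : stratum P l n ⊆ M := by
  induction n with
  | zero => exact Set.empty_subset M
  | succ n ih =>
    refine stratum_succ_subset_of_closed ⟨ih, fun r hr hn hneg hpos => ?_⟩
    have hneg' : (↑r.neg ∩ ⋃ k, stratum P l k : Set α) = ∅ := by
      refine Set.eq_empty_of_forall_notMem fun c ⟨hc, hcM⟩ => ?_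
      have hcn : c ∈ stratum P l n := (mem_iUnion_stratum_iff (hn ▸ (hl r hr).2 c hc)).1 hcM
      exact Set.eq_empty_iff_forall_notMem.1 hneg c ⟨hc, hcn⟩
    exact hM ⟨r.head, r.pos, ∅⟩ ⟨r, ⟨hr, hneg'⟩, rfl⟩ hpos (by simp)

end Stratification

theorem stmt_8_general {α : Type} (P : Set (NRule α))
    (hstrat : isLocallyStratified P) :
    ∃ M : Set α, isAnswerSet M P := by
  obtain ⟨l, hl⟩ := isLocallyStratified_iff.1 hstrat
  exact ⟨⋃ k, stratum P l k, isModel_reduct_iUnion_stratum hl, fun M hsub hM =>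
    hsub.antisymm (Set.iUnion_subset (stratum_subset_of_isModel_reduct hl hM))⟩

theorem stmt_8 {α : Type} (P : Set (NRule α)) (hP : P.Finite)
    (hstrat : isLocallyStratified P) :
    ∃ M : Set α, isAnswerSet M P :=
  stmt_8_general P hstrat
end

section
/- The pair of linear inequalities ∑_{i=1}^{m} p_i − ∑_{j=1}^{k} q_j − (m+k)·bd ≥ −k and ∑_{i=1}^{m} p_i − ∑_{j=1}^{k} q_j − bd ≤ m − 1, over binary variables p_i, q_j, bd ∈ {0,1}, hold simultaneously if and only if bd = 1 ⟺ (all p_i = 1 and all q_j = 0). -/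
section Binary

variable {ι R : Type*} [Fintype ι] [CommRing R] [PartialOrder R] [IsOrderedRing R]
  {f : ι → R}

theorem mem_Icc_of_binary {x : R} (hx : x = 0 ∨ x = 1) : x ∈ Set.Icc 0 1 := by
  rcases hx with rfl | rfl <;> simp

theorem sum_nonneg_of_binary (hf : ∀ i, f i = 0 ∨ f i = 1) : 0 ≤ ∑ i, f i :=
  Fintype.sum_nonneg fun i => (mem_Icc_of_binary (hf i)).1

theorem sum_le_card_of_binary (hf : ∀ i, f i = 0 ∨ f i = 1) :
    ∑ i, f i ≤ Fintype.card ι := by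
  simpa using Finset.sum_le_card_nsmul Finset.univ f 1 fun i _ => (mem_Icc_of_binary (hf i)).2

theorem sum_eq_card_iff_of_binary (hf : ∀ i, f i = 0 ∨ f i = 1) :
    ∑ i, f i = Fintype.card ι ↔ ∀ i, f i = 1 := by
  simpa using Finset.sum_eq_sum_iff_of_le (s := Finset.univ) (g := 1) fun i _ =>
    (mem_Icc_of_binary (hf i)).2

theorem sum_eq_zero_iff_of_binary (hf : ∀ i, f i = 0 ∨ f i = 1) :
    ∑ i, f i = 0 ↔ ∀ i, f i = 0 := by
  simpa [funext_iff] using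
    Fintype.sum_eq_zero_iff_of_nonneg fun i => (mem_Icc_of_binary (hf i)).1

end Binary

theorem body_constraints_iff {S T m k bd : ℤ} (hS₀ : 0 ≤ S) (hSm : S ≤ m) (hT₀ : 0 ≤ T)
    (hTk : T ≤ k) (hbd : bd = 0 ∨ bd = 1) :
    (S - T - (m + k) * bd ≥ -k ∧ S - T - bd ≤ m - 1) ↔ (bd = 1 ↔ S = m ∧ T = 0) := by
  rcases hbd with rfl | rfl
  · simp only [mul_zero]
    omega
  · simp only [mul_one, true_iff]
    omega

theorem stmt_17_general (m k : ℕ) (p : Fin m → ℤ) (q : Fin k → ℤ)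
    (bd : ℤ) (hp : ∀ i, p i = 0 ∨ p i = 1) (hq : ∀ j, q j = 0 ∨ q j = 1)
    (hbd : bd = 0 ∨ bd = 1) :
    ((∑ i, p i) - (∑ j, q j) - ((m : ℤ) + (k : ℤ)) * bd ≥ -(k : ℤ) ∧
     (∑ i, p i) - (∑ j, q j) - bd ≤ (m : ℤ) - 1)
    ↔ (bd = 1 ↔ ((∀ i, p i = 1) ∧ (∀ j, q j = 0))) := by
  have hpm := sum_le_card_of_binary hp
  have hqk := sum_le_card_of_binary hq
  rw [← sum_eq_card_iff_of_binary hp, ← sum_eq_zero_iff_of_binary hq, Fintype.card_fin]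
  rw [Fintype.card_fin] at hpm hqk
  exact body_constraints_iff (sum_nonneg_of_binary hp) hpm (sum_nonneg_of_binary hq) hqk hbd

theorem stmt_17 (m k : ℕ) (hmk : m + k ≥ 1) (p : Fin m → ℤ) (q : Fin k → ℤ)
    (bd : ℤ) (hp : ∀ i, p i = 0 ∨ p i = 1) (hq : ∀ j, q j = 0 ∨ q j = 1)
    (hbd : bd = 0 ∨ bd = 1) :
    ((∑ i, p i) - (∑ j, q j) - ((m : ℤ) + (k : ℤ)) * bd ≥ -(k : ℤ) ∧
     (∑ i, p i) - (∑ j, q j) - bd ≤ (m : ℤ) - 1)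
    ↔ (bd = 1 ↔ ((∀ i, p i = 1) ∧ (∀ j, q j = 0))) :=
  stmt_17_general m k p q bd hp hq hbd
end
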